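/- Let F be a field of characteristic ≠ 2 and let S ⊆ M₇(F) be the F-linear span of the six matrices M₁ = E₁₂ + E₅₇, M₂ = E₁₃ + E₂₄ + E₆₇, M₃ = E₁₄, M₄ = E₁₅ + E₂₇, M₅ = E₁₆ + E₃₇, M₆ = E₁₇. Then S is closed under matrix multiplication (hence is a non-unital F-subalgebra of the strictly upper triangular 7×7 matrices), S is not commutative, and S is centrally essential. -/

import Mathlib

/-- A (not necessarily unital) ring is *centrally essential* if either it is commutative, or
for every non-central element `a` there exist nonzero central elements `x`, `y` with
`a * x = y`. -/
def IsCentrallyEssential (R : Type*) [NonUnitalNonAssocRing R] : Prop :=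
  (∀ a b : R, a * b = b * a) ∨
    ∀ a : R, ¬ (∀ b : R, a * b = b * a) →
      ∃ x y : R, (∀ b : R, x * b = b * x) ∧ (∀ b : R, y * b = b * y) ∧
        x ≠ 0 ∧ y ≠ 0 ∧ a * x = y

open Matrix

/-- `M₁ = E₁₂ + E₅₇` (with matrix positions `1`-indexed). -/
def ceM1 (F : Type*) [Field F] : Matrix (Fin 7) (Fin 7) F :=
  Matrix.single 0 1 1 + Matrix.single 4 6 1

/-- `M₂ = E₁₃ + E₂₄ + E₆₇`. -/
def ceM2 (F : Type*) [Field F] : Matrix (Fin 7) (Fin 7) F :=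
  Matrix.single 0 2 1 + Matrix.single 1 3 1 + Matrix.single 5 6 1

/-- `M₃ = E₁₄`. -/
def ceM3 (F : Type*) [Field F] : Matrix (Fin 7) (Fin 7) F :=
  Matrix.single 0 3 1

/-- `M₄ = E₁₅ + E₂₇`. -/
def ceM4 (F : Type*) [Field F] : Matrix (Fin 7) (Fin 7) F :=
  Matrix.single 0 4 1 + Matrix.single 1 6 1

/-- `M₅ = E₁₆ + E₃₇`. -/
def ceM5 (F : Type*) [Field F] : Matrix (Fin 7) (Fin 7) F :=
  Matrix.single 0 5 1 + Matrix.single 2 6 1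

/-- `M₆ = E₁₇`. -/
def ceM6 (F : Type*) [Field F] : Matrix (Fin 7) (Fin 7) F :=
  Matrix.single 0 6 1

/-- The set of generators `{M₁, …, M₆}`. -/
def ceGenSet (F : Type*) [Field F] : Set (Matrix (Fin 7) (Fin 7) F) :=
  {ceM1 F, ceM2 F, ceM3 F, ceM4 F, ceM5 F, ceM6 F}

/-!
The first row of `∑ cₖ Mₖ` is `(0, c₁, …, c₆)`, so the `Mₖ` are linearly independent, and the
only nonzero products of generators are `M₁M₂ = M₃` and `M₁M₄ = M₄M₁ = M₂M₅ = M₅M₂ = M₆`.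
Hence the span is closed under multiplication, `M₁M₂ ≠ M₂M₁`, and every element without an
`M₁`- or `M₂`-component is central. A non-central `a = ∑ cₖMₖ` has `c₁ ≠ 0` or `c₂ ≠ 0`, and
then `a M₄ = c₁ M₆` or `a M₅ = c₂ M₆` is a nonzero central element.
-/

theorem isCentrallyEssential_of_exists_central_mul {R : Type*} [NonUnitalNonAssocRing R]
    (h : ∀ a : R, ¬ (∀ b, Commute a b) →
      ∃ x : R, (∀ b, Commute x b) ∧ (∀ b, Commute (a * x) b) ∧ a * x ≠ 0) :
    IsCentrallyEssential R := by
  refine Or.inr fun a ha => ?_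
  obtain ⟨x, hx, hax, hne⟩ := h a ha
  exact ⟨x, a * x, hx, hax, by rintro rfl; exact hne (mul_zero a), hne, rfl⟩

theorem NonUnitalSubalgebra.isCentrallyEssential_of_exists_central_mul {R A : Type*}
    [CommRing R] [NonUnitalNonAssocRing A] [Module R A] (S : NonUnitalSubalgebra R A)
    (h : ∀ a ∈ S, ¬ (∀ b ∈ S, Commute a b) →
      ∃ x ∈ S, (∀ b ∈ S, Commute x b) ∧ (∀ b ∈ S, Commute (a * x) b) ∧ a * x ≠ 0) :
    IsCentrallyEssential S := by
  refine _root_.isCentrallyEssential_of_exists_central_mul fun a ha => ?_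
  obtain ⟨x, hxS, hx, hax, hne⟩ := h a a.2 fun hc => ha fun b => Subtype.ext (hc b b.2)
  exact ⟨⟨x, hxS⟩, fun b => Subtype.ext (hx b b.2), fun b => Subtype.ext (hax b b.2),
    fun h0 => hne (congrArg Subtype.val h0)⟩

theorem NonUnitalAlgebra.adjoin_eq_toNonUnitalSubalgebra_span {R A : Type*} [CommSemiring R]
    [NonUnitalNonAssocSemiring A] [Module R A] [IsScalarTower R A A] [SMulCommClass R A A]
    {s : Set A} (hmul : ∀ x y, x ∈ Submodule.span R s → y ∈ Submodule.span R s →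
      x * y ∈ Submodule.span R s) :
    adjoin R s = (Submodule.span R s).toNonUnitalSubalgebra hmul :=
  le_antisymm (adjoin_le Submodule.subset_span)
    (Submodule.span_le.mpr (subset_adjoin R) : Submodule.span R s ≤ (adjoin R s).toSubmodule)

theorem Matrix.single_apply_eq_zero_of_le {n α : Type*} [Preorder n] [DecidableEq n] [Zero α]
    {p q i j : n} (hpq : p < q) (hji : j ≤ i) (c : α) : single p q c i j = 0 :=
  single_apply_of_ne _ _ _ _ _ (by rintro ⟨rfl, rfl⟩; exact hji.not_gt hpq)

section
variable {F : Type*} [Field F]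

def ceCombo (c : Fin 6 → F) : Matrix (Fin 7) (Fin 7) F :=
  c 0 • ceM1 F + c 1 • ceM2 F + c 2 • ceM3 F + c 3 • ceM4 F + c 4 • ceM5 F + c 5 • ceM6 F

theorem mem_span_ceGenSet_iff {A : Matrix (Fin 7) (Fin 7) F} :
    A ∈ Submodule.span F (ceGenSet F) ↔ ∃ c, ceCombo c = A := by
  have hrange : ceGenSet F = Set.range ![ceM1 F, ceM2 F, ceM3 F, ceM4 F, ceM5 F, ceM6 F] := by
    simp only [ceGenSet, range_cons, range_empty, Set.union_empty, Set.singleton_union]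
  rw [hrange, Submodule.mem_span_range_iff_exists_fun]
  simp [Fin.sum_univ_six, ceCombo]

theorem ceCombo_apply_zero_succ (c : Fin 6 → F) (k : Fin 6) : ceCombo c 0 k.succ = c k := by
  fin_cases k <;> simp [ceCombo, ceM1, ceM2, ceM3, ceM4, ceM5, ceM6]

theorem ceCombo_injective : Function.Injective (ceCombo : (Fin 6 → F) → _) := fun c d h =>
  funext fun k => by simpa [ceCombo_apply_zero_succ] using congrFun (congrFun h 0) k.succ

@[simp] theorem ceCombo_zero : ceCombo (0 : Fin 6 → F) = 0 := by simp [ceCombo]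

theorem ceCombo_apply_of_le (c : Fin 6 → F) {i j : Fin 7} (hji : j ≤ i) : ceCombo c i j = 0 := by
  simp [ceCombo, ceM1, ceM2, ceM3, ceM4, ceM5, ceM6, single_apply_eq_zero_of_le _ hji]

theorem ceCombo_mul_ceCombo (c d : Fin 6 → F) :
    ceCombo c * ceCombo d =
      ceCombo ![0, 0, c 0 * d 1, 0, 0, c 0 * d 3 + c 1 * d 4 + c 3 * d 0 + c 4 * d 1] := by
  simp only [ceCombo, ceM1, ceM2, ceM3, ceM4, ceM5, ceM6, add_mul, mul_add, smul_add,
    smul_mul_assoc, mul_smul_comm, single_mul_single_same, ne_eq, Fin.reduceEq, not_false_eq_true,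
    single_mul_single_of_ne, smul_zero, add_zero, zero_add, mul_one, cons_val, zero_smul]
  module

theorem ceCombo_eq_zero_iff {c : Fin 6 → F} : ceCombo c = 0 ↔ c = 0 := by
  rw [← ceCombo_zero, ceCombo_injective.eq_iff]

theorem ceCombo_commute_of_eq_zero {c : Fin 6 → F} (hc0 : c 0 = 0) (hc1 : c 1 = 0)
    (d : Fin 6 → F) : Commute (ceCombo c) (ceCombo d) := by
  simp only [Commute, SemiconjBy, ceCombo_mul_ceCombo, hc0, hc1]
  congr 1
  simp only [zero_mul, mul_zero, zero_add, add_zero, vecCons_inj, true_and, and_true]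
  ring

theorem not_commute_ceCombo_single :
    ¬ Commute (ceCombo (Pi.single 0 1 : Fin 6 → F)) (ceCombo (Pi.single 1 1)) := by
  rw [Commute, SemiconjBy, ceCombo_mul_ceCombo, ceCombo_mul_ceCombo, ceCombo_injective.eq_iff]
  intro h
  simpa using congrFun h 2

theorem mul_mem_span_ceGenSet {A B : Matrix (Fin 7) (Fin 7) F}
    (hA : A ∈ Submodule.span F (ceGenSet F)) (hB : B ∈ Submodule.span F (ceGenSet F)) :
    A * B ∈ Submodule.span F (ceGenSet F) := by
  obtain ⟨c, rfl⟩ := mem_span_ceGenSet_iff.mp hA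
  obtain ⟨d, rfl⟩ := mem_span_ceGenSet_iff.mp hB
  exact mem_span_ceGenSet_iff.mpr ⟨_, (ceCombo_mul_ceCombo c d).symm⟩

variable (F) in
theorem adjoin_ceGenSet_eq : NonUnitalAlgebra.adjoin F (ceGenSet F) =
    (Submodule.span F (ceGenSet F)).toNonUnitalSubalgebra fun _ _ => mul_mem_span_ceGenSet :=
  NonUnitalAlgebra.adjoin_eq_toNonUnitalSubalgebra_span _

theorem mem_adjoin_ceGenSet_iff {A : Matrix (Fin 7) (Fin 7) F} :
    A ∈ NonUnitalAlgebra.adjoin F (ceGenSet F) ↔ ∃ c, ceCombo c = A := by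
  rw [adjoin_ceGenSet_eq, Submodule.mem_toNonUnitalSubalgebra, mem_span_ceGenSet_iff]

variable (F) in
theorem isCentrallyEssential_adjoin_ceGenSet :
    IsCentrallyEssential (NonUnitalAlgebra.adjoin F (ceGenSet F)) := by
  refine NonUnitalSubalgebra.isCentrallyEssential_of_exists_central_mul _ fun a ha hnc => ?_
  obtain ⟨c, rfl⟩ := mem_adjoin_ceGenSet_iff.mp ha
  simp only [mem_adjoin_ceGenSet_iff, forall_exists_index, forall_apply_eq_imp_iff,
    exists_exists_eq_and] at hnc ⊢
  have hc : c 0 ≠ 0 ∨ c 1 ≠ 0 := by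
    by_contra! h
    exact hnc (ceCombo_commute_of_eq_zero h.1 h.2)
  obtain ⟨e, he0, he1, hne⟩ : ∃ e : Fin 6 → F, e 0 = 0 ∧ e 1 = 0 ∧ c 0 * e 3 + c 1 * e 4 ≠ 0 := by
    rcases hc with h | h
    · exact ⟨Pi.single 3 1, rfl, rfl, by simpa⟩
    · exact ⟨Pi.single 4 1, rfl, rfl, by simpa⟩
  refine ⟨e, ceCombo_commute_of_eq_zero he0 he1, ?_, ?_⟩
  · rw [ceCombo_mul_ceCombo]
    exact ceCombo_commute_of_eq_zero rfl rfl
  · rw [ceCombo_mul_ceCombo, Ne, ceCombo_eq_zero_iff]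
    exact fun h => hne (by simpa [he0, he1] using congrFun h 5)

end

theorem span_closed_noncommutative_centrallyEssential_general
    (F : Type*) [Field F] :
    (∀ A ∈ Submodule.span F (ceGenSet F), ∀ B ∈ Submodule.span F (ceGenSet F),
        A * B ∈ Submodule.span F (ceGenSet F)) ∧
    ((NonUnitalAlgebra.adjoin F (ceGenSet F) : Set (Matrix (Fin 7) (Fin 7) F)) =
        (Submodule.span F (ceGenSet F) : Set (Matrix (Fin 7) (Fin 7) F))) ∧
    (∀ A ∈ NonUnitalAlgebra.adjoin F (ceGenSet F), ∀ i j : Fin 7, j ≤ i → A i j = 0) ∧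
    ¬ (∀ a b : NonUnitalAlgebra.adjoin F (ceGenSet F), a * b = b * a) ∧
    IsCentrallyEssential (NonUnitalAlgebra.adjoin F (ceGenSet F)) := by
  refine ⟨fun A hA B hB => mul_mem_span_ceGenSet hA hB, by rw [adjoin_ceGenSet_eq]; rfl, ?_, ?_,
    isCentrallyEssential_adjoin_ceGenSet F⟩
  · intro A hA i j hji
    obtain ⟨c, rfl⟩ := mem_adjoin_ceGenSet_iff.mp hA
    exact ceCombo_apply_of_le c hji
  · intro hcomm
    have hmem (c : Fin 6 → F) : ceCombo c ∈ NonUnitalAlgebra.adjoin F (ceGenSet F) :=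
      mem_adjoin_ceGenSet_iff.mpr ⟨c, rfl⟩
    exact not_commute_ceCombo_single (congrArg Subtype.val (hcomm ⟨_, hmem _⟩ ⟨_, hmem _⟩))

/-- The `F`-linear span of `M₁, …, M₆` is closed under matrix multiplication (hence it is a
non-unital `F`-subalgebra consisting of strictly upper triangular matrices), it is not
commutative, and it is centrally essential. -/
theorem span_closed_noncommutative_centrallyEssential
    (F : Type*) [Field F] (hF : ringChar F ≠ 2) :
    (∀ A ∈ Submodule.span F (ceGenSet F), ∀ B ∈ Submodule.span F (ceGenSet F),
        A * B ∈ Submodule.span F (ceGenSet F)) ∧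
    ((NonUnitalAlgebra.adjoin F (ceGenSet F) : Set (Matrix (Fin 7) (Fin 7) F)) =
        (Submodule.span F (ceGenSet F) : Set (Matrix (Fin 7) (Fin 7) F))) ∧
    (∀ A ∈ NonUnitalAlgebra.adjoin F (ceGenSet F), ∀ i j : Fin 7, j ≤ i → A i j = 0) ∧
    ¬ (∀ a b : NonUnitalAlgebra.adjoin F (ceGenSet F), a * b = b * a) ∧
    IsCentrallyEssential (NonUnitalAlgebra.adjoin F (ceGenSet F)) :=
  span_closed_noncommutative_centrallyEssential_general F
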